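/- arXiv:2402.08243 — 3 statements merged into one kernel-verified Lean document; each statement's English description precedes it below -/
import Mathlib

section
/- Let cos θ_x = ((N-2) + (-1)^{x-1} √(N² - 4N^α + 4N^{2α}/(N + N^α − 1))) / (2(N−1)) for x ∈ {1,2}. Then for all sufficiently large N and α ∈ [0,1), both values lie in [−1, 1], i.e., they are valid cosines. -/
open Filter Real

theorem cos_theta_valid (α : ℝ) (h0 : 0 ≤ α) (h1 : α < 1) :
    ∀ᶠ N : ℝ in atTop,
      (-1 ≤ ((N - 2) + Real.sqrt (N ^ 2 - 4 * N ^ α + 4 * N ^ (2 * α) / (N + N ^ α - 1)))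
              / (2 * (N - 1)) ∧
        ((N - 2) + Real.sqrt (N ^ 2 - 4 * N ^ α + 4 * N ^ (2 * α) / (N + N ^ α - 1)))
              / (2 * (N - 1)) ≤ 1) ∧
      (-1 ≤ ((N - 2) - Real.sqrt (N ^ 2 - 4 * N ^ α + 4 * N ^ (2 * α) / (N + N ^ α - 1)))
              / (2 * (N - 1)) ∧
        ((N - 2) - Real.sqrt (N ^ 2 - 4 * N ^ α + 4 * N ^ (2 * α) / (N + N ^ α - 1)))
              / (2 * (N - 1)) ≤ 1) := by
  filter_upwards [eventually_ge_atTop (2 : ℝ)] with N hN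
  have hNpos : (0 : ℝ) < N := by linarith
  set a : ℝ := N ^ α with ha
  have hapos : 0 < a := Real.rpow_pos_of_pos hNpos α
  have haN : a ≤ N := by
    have := Real.rpow_le_rpow_of_exponent_le (by linarith : (1:ℝ) ≤ N) (le_of_lt h1)
    simpa [Real.rpow_one] using this
  have hden : 0 < N + a - 1 := by linarith
  have h2a : N ^ (2 * α) = a * a := by
    rw [two_mul, Real.rpow_add hNpos]
  have hDle : N ^ 2 - 4 * N ^ α + 4 * N ^ (2 * α) / (N + N ^ α - 1) ≤ N ^ 2 := by
    rw [h2a, ← ha]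
    have hfrac : 4 * (a * a) / (N + a - 1) ≤ 4 * a := by
      rw [div_le_iff₀ hden]
      nlinarith
    linarith
  set s : ℝ := Real.sqrt (N ^ 2 - 4 * N ^ α + 4 * N ^ (2 * α) / (N + N ^ α - 1)) with hs
  have hs0 : 0 ≤ s := Real.sqrt_nonneg _
  have hsN : s ≤ N := by
    rw [hs]
    calc Real.sqrt (N ^ 2 - 4 * N ^ α + 4 * N ^ (2 * α) / (N + N ^ α - 1))
        ≤ Real.sqrt (N ^ 2) := Real.sqrt_le_sqrt hDle
      _ = N := by rw [Real.sqrt_sq hNpos.le]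
  have hd : 0 < 2 * (N - 1) := by linarith
  refine ⟨⟨?_, ?_⟩, ?_, ?_⟩
  · rw [le_div_iff₀ hd]; linarith
  · rw [div_le_one hd]; linarith
  · rw [le_div_iff₀ hd]; linarith
  · rw [div_le_one hd]; linarith
end

section
/- For fixed α with 0 ≤ α < 1, as N → ∞, cos θ₁ = ((N−2) + √(N² − 4N^α + 4N^{2α}/(N + N^α − 1)))/(2(N−1)) satisfies cos θ₁ = 1 − N^{α−2} + o(N^{α−2}). -/
/-!
Write `a = N ^ α`, so that the radicand is `S = N² - 4(N - 1) · a / (N + a - 1)`. Since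
`0 ≤ a / (N + a - 1) ≤ 1`, we have `(N - 2)² ≤ S ≤ N²`, hence `√S = N + O(1)`. Rationalising,
`cos θ₁ - 1 = (√S - N) / (2(N - 1)) = -2a / ((N + a - 1)(√S + N))`, and as `a = o(N)` the
denominator is asymptotic to `2N²`, giving `cos θ₁ - 1 ~ -a / N² = -N ^ (α - 2)`.
-/

open Filter Real Asymptotics

lemma isLittleO_rpow_id_atTop {α : ℝ} (hα : α < 1) : (fun N : ℝ => N ^ α) =o[atTop] id := by
  have h := ((isLittleO_one_iff ℝ).2 (tendsto_rpow_neg_atTop (sub_pos.2 hα))).mul_isBigO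
    (isBigO_refl (id : ℝ → ℝ) atTop)
  refine h.congr' ?_ (.of_forall fun _ => one_mul _)
  filter_upwards [eventually_gt_atTop 0] with N hN
  rw [id, ← rpow_add_one hN.ne']
  ring_nf

noncomputable def radicand (N a : ℝ) : ℝ := N ^ 2 - 4 * a + 4 * a ^ 2 / (N + a - 1)

noncomputable def cosThetaOne (N a : ℝ) : ℝ := ((N - 2) + √(radicand N a)) / (2 * (N - 1))

section
variable {N a : ℝ}

lemma radicand_eq (h : N + a - 1 ≠ 0) :
    radicand N a = N ^ 2 - 4 * (N - 1) * (a / (N + a - 1)) := by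
  rw [radicand]
  field_simp
  ring

lemma radicand_mem_Icc (hN : 1 < N) (ha : 0 ≤ a) :
    radicand N a ∈ Set.Icc ((N - 2) ^ 2) (N ^ 2) := by
  have hpos : 0 < N + a - 1 := by linarith
  have hq : 0 ≤ a / (N + a - 1) := div_nonneg ha hpos.le
  have hq1 : a / (N + a - 1) ≤ 1 := (div_le_one hpos).2 (by linarith)
  rw [radicand_eq hpos.ne']
  constructor <;> nlinarith

lemma abs_sqrt_radicand_sub_le (hN : 1 < N) (ha : 0 ≤ a) : |√(radicand N a) - N| ≤ 2 := by
  obtain ⟨hlo, hhi⟩ := radicand_mem_Icc hN ha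
  have hlo' : N - 2 ≤ √(radicand N a) :=
    (le_abs_self _).trans ((sqrt_sq_eq_abs _).symm.le.trans (sqrt_le_sqrt hlo))
  have hhi' : √(radicand N a) ≤ N := (sqrt_le_sqrt hhi).trans (sqrt_sq (by linarith)).le
  rw [abs_le]
  constructor <;> linarith

lemma cosThetaOne_sub_one (hN : 1 < N) (ha : 0 ≤ a) :
    cosThetaOne N a - 1 = -(2 * a / ((N + a - 1) * (√(radicand N a) + N))) := by
  have hpos : 0 < N + a - 1 := by linarith
  have hN1 : N - 1 ≠ 0 := by linarith
  have hsq := sq_sqrt ((sq_nonneg (N - 2)).trans (radicand_mem_Icc hN ha).1)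
  have hsum : 0 < √(radicand N a) + N := by positivity
  rw [cosThetaOne]
  generalize √(radicand N a) = s at hsq hsum ⊢
  rw [radicand_eq hpos.ne'] at hsq
  field_simp at hsq ⊢
  linear_combination hsq

end

lemma isEquivalent_cosThetaOne_sub_one {a : ℝ → ℝ} (ha : ∀ᶠ N in atTop, 0 ≤ a N)
    (hao : a =o[atTop] id) :
    (fun N => cosThetaOne N (a N) - 1) ~[atTop] fun N => -(a N / N ^ 2) := by
  have hden₁ : (fun N => N + a N - 1) ~[atTop] id :=
    (IsEquivalent.refl.add_isLittleO (hao.sub (isLittleO_const_id_atTop (1 : ℝ)))).congr_left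
      (.of_forall fun N => by simp only [Pi.add_apply, id]; ring)
  have hden₂ : (fun N => √(radicand N (a N)) + N) ~[atTop] fun N => 2 * N := by
    have hbdd : (fun N => √(radicand N (a N)) - N) =O[atTop] fun _ => (1 : ℝ) := by
      refine .of_bound 2 ?_
      filter_upwards [ha, eventually_gt_atTop 1] with N haN hN
      simpa using abs_sqrt_radicand_sub_le hN haN
    refine IsLittleO.isEquivalent ?_
    refine (hbdd.trans_isLittleO ?_).congr_left fun N => by simp only [Pi.sub_apply]; ring
    exact (isLittleO_const_id_atTop (1 : ℝ)).const_mul_right' (isUnit_iff_ne_zero.2 two_ne_zero)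
  refine (((IsEquivalent.refl (u := fun N => 2 * a N)).div (hden₁.mul hden₂)).neg.congr_right
    ?_).congr_left ?_
  · filter_upwards [eventually_ne_atTop 0] with N hN
    simp only [Pi.div_apply, Pi.mul_apply, id]
    field_simp
  · filter_upwards [ha, eventually_gt_atTop 1] with N haN hN
    exact (cosThetaOne_sub_one hN haN).symm

theorem cos_theta_one_asymptotics_general (α : ℝ) (h1 : α < 1) :
    (fun N : ℝ =>
        ((N - 2) + Real.sqrt (N ^ 2 - 4 * N ^ α + 4 * N ^ (2 * α) / (N + N ^ α - 1)))
            / (2 * (N - 1)) - (1 - N ^ (α - 2)))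
      =o[atTop] fun N : ℝ => N ^ (α - 2) := by
  have h := isEquivalent_cosThetaOne_sub_one (a := fun N => N ^ α)
    ((eventually_ge_atTop 0).mono fun N hN => rpow_nonneg hN α) (isLittleO_rpow_id_atTop h1)
  refine isLittleO_neg_right.1 (h.isLittleO.congr' ?_ ?_)
  · filter_upwards [eventually_gt_atTop 0] with N hN
    have h2α : N ^ (2 * α) = (N ^ α) ^ 2 := by
      rw [mul_comm]
      exact_mod_cast rpow_mul_natCast hN.le α 2
    rw [Pi.sub_apply, cosThetaOne, radicand, h2α, rpow_sub hN, rpow_two]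
    ring
  · filter_upwards [eventually_gt_atTop 0] with N hN
    simp only [rpow_sub hN, rpow_two]

theorem cos_theta_one_asymptotics (α : ℝ) (h0 : 0 ≤ α) (h1 : α < 1) :
    (fun N : ℝ =>
        ((N - 2) + Real.sqrt (N ^ 2 - 4 * N ^ α + 4 * N ^ (2 * α) / (N + N ^ α - 1)))
            / (2 * (N - 1)) - (1 - N ^ (α - 2)))
      =o[atTop] fun N : ℝ => N ^ (α - 2) :=
  cos_theta_one_asymptotics_general α h1
end

section
/- For fixed α > 1, as N → ∞, cos θ₁ = ((N−2) + √(N² − 4N^α + 4N^{2α}/(N + N^α − 1)))/(2(N−1)) satisfies cos θ₁ = 1 − N^{−1} + o(N^{−1}). -/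
open Filter Real Asymptotics

theorem cos_theta_one_asymptotics_alpha_gt_one (α : ℝ) (hα : 1 < α) :
    (fun N : ℝ =>
        ((N - 2) + Real.sqrt (N ^ 2 - 4 * N ^ α + 4 * N ^ (2 * α) / (N + N ^ α - 1)))
            / (2 * (N - 1)) - (1 - N⁻¹))
      =o[atTop] fun N : ℝ => N⁻¹ := by
  have hcond : ∀ᶠ N : ℝ in atTop, (N⁻¹ = 0) →
      ((N - 2) + Real.sqrt (N ^ 2 - 4 * N ^ α + 4 * N ^ (2 * α) / (N + N ^ α - 1)))
            / (2 * (N - 1)) - (1 - N⁻¹) = 0 := by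
    filter_upwards [eventually_gt_atTop (0:ℝ)] with N hN h0
    exact absurd (inv_eq_zero.mp h0) hN.ne'
  rw [isLittleO_iff_tendsto' hcond]
  have key : ∀ᶠ N : ℝ in atTop,
      (((N - 2) + Real.sqrt (N ^ 2 - 4 * N ^ α + 4 * N ^ (2 * α) / (N + N ^ α - 1)))
            / (2 * (N - 1)) - (1 - N⁻¹)) / N⁻¹
      = -1/(N-1) + 2*N*(N-1)/((N + N ^ α - 1) *
          (Real.sqrt (N ^ 2 - 4 * N ^ α + 4 * N ^ (2 * α) / (N + N ^ α - 1)) + (N-2))) := by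
    filter_upwards [eventually_ge_atTop (4:ℝ)] with N hN
    have hN0 : (0:ℝ) < N := by linarith
    have hA1 : N ≤ N ^ α := by
      calc N = N ^ (1:ℝ) := (Real.rpow_one N).symm
      _ ≤ N ^ α := Real.rpow_le_rpow_of_exponent_le (by linarith) hα.le
    have hA0 : 0 < N ^ α := lt_of_lt_of_le hN0 hA1
    have hD0 : 0 < N + N ^ α - 1 := by linarith
    have hA2 : N ^ (2*α) = (N ^ α)^2 := by
      rw [two_mul, Real.rpow_add hN0, sq]
    have hS : N ^ 2 - 4 * N ^ α + 4 * N ^ (2 * α) / (N + N ^ α - 1)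
        = (N^2*(N-1) + N^α*(N-2)^2) / (N + N ^ α - 1) := by
      rw [hA2]; field_simp; ring
    set s := Real.sqrt (N ^ 2 - 4 * N ^ α + 4 * N ^ (2 * α) / (N + N ^ α - 1)) with hsdef
    have hSge : (N-2)^2 ≤ N ^ 2 - 4 * N ^ α + 4 * N ^ (2 * α) / (N + N ^ α - 1) := by
      rw [hS, le_div_iff₀ hD0]
      nlinarith [hA0]
    have hs0 : 0 ≤ N ^ 2 - 4 * N ^ α + 4 * N ^ (2 * α) / (N + N ^ α - 1) :=
      le_trans (sq_nonneg _) hSge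
    have hs2 : s^2 = N ^ 2 - 4 * N ^ α + 4 * N ^ (2 * α) / (N + N ^ α - 1) :=
      Real.sq_sqrt hs0
    have hsge : N - 2 ≤ s := by
      have h := Real.sqrt_le_sqrt hSge
      rwa [Real.sqrt_sq (by linarith : (0:ℝ) ≤ N - 2)] at h
    have hE : 0 < s + (N - 2) := by linarith
    have hmul : (s - (N-2)) * (s + (N-2)) * (N + N^α - 1) = 4*(N-1)^2 := by
      have h' : (s - (N-2)) * (s + (N-2)) = s^2 - (N-2)^2 := by ring
      rw [h', hs2, hS]
      field_simp
      ring
    clear hsdef hs2 hs0 hSge hS hA2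
    clear_value s
    have h1 : N - 2 + s = 2*(N-2) + 4*(N-1)^2 / ((N + N^α - 1) * (s + (N-2))) := by
      have h1' : s - (N-2) = 4*(N-1)^2 / ((N + N^α - 1) * (s + (N-2))) := by
        rw [eq_div_iff (by positivity : ((N + N^α - 1) * (s + (N-2))) ≠ 0)]
        linear_combination hmul
      linarith [h1']
    rw [h1]
    have hN1 : N - 1 ≠ 0 := by intro h; linarith
    field_simp
    ring
  refine Tendsto.congr' (key.mono fun N h => h.symm) ?_
  have hT1 : Tendsto (fun N : ℝ => -1/(N-1)) atTop (nhds 0) := by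
    apply Tendsto.div_atTop (tendsto_const_nhds (α := ℝ))
    have := tendsto_atTop_add_const_right atTop (-1 : ℝ) (tendsto_id (α := ℝ))
    simpa [sub_eq_add_neg] using this
  have hT2 : Tendsto (fun N : ℝ => 2*N*(N-1)/((N + N ^ α - 1) *
      (Real.sqrt (N ^ 2 - 4 * N ^ α + 4 * N ^ (2 * α) / (N + N ^ α - 1)) + (N-2))))
      atTop (nhds 0) := by
    have hg : Tendsto (fun N : ℝ => 2 * N ^ (-(α - 1))) atTop (nhds 0) := by
      have := (tendsto_rpow_neg_atTop (by linarith : (0:ℝ) < α - 1)).const_mul (2:ℝ)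
      simpa using this
    apply squeeze_zero' ?_ ?_ hg
    · filter_upwards [eventually_ge_atTop (4:ℝ)] with N hN
      have hN0 : (0:ℝ) < N := by linarith
      have hA1 : N ≤ N ^ α := by
        calc N = N ^ (1:ℝ) := (Real.rpow_one N).symm
        _ ≤ N ^ α := Real.rpow_le_rpow_of_exponent_le (by linarith) hα.le
      have hA0 : 0 < N ^ α := lt_of_lt_of_le hN0 hA1
      have hD0 : 0 < N + N ^ α - 1 := by linarith
      have hsnn : 0 ≤ Real.sqrt (N ^ 2 - 4 * N ^ α + 4 * N ^ (2 * α) / (N + N ^ α - 1)) :=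
        Real.sqrt_nonneg _
      apply div_nonneg (by nlinarith) (by nlinarith)
    · filter_upwards [eventually_ge_atTop (4:ℝ)] with N hN
      have hN0 : (0:ℝ) < N := by linarith
      have hA1 : N ≤ N ^ α := by
        calc N = N ^ (1:ℝ) := (Real.rpow_one N).symm
        _ ≤ N ^ α := Real.rpow_le_rpow_of_exponent_le (by linarith) hα.le
      have hA0 : 0 < N ^ α := lt_of_lt_of_le hN0 hA1
      have hD0 : 0 < N + N ^ α - 1 := by linarith
      have hA2 : N ^ (2*α) = (N ^ α)^2 := by
        rw [two_mul, Real.rpow_add hN0, sq]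
      have hS : N ^ 2 - 4 * N ^ α + 4 * N ^ (2 * α) / (N + N ^ α - 1)
          = (N^2*(N-1) + N^α*(N-2)^2) / (N + N ^ α - 1) := by
        rw [hA2]; field_simp; ring
      set s := Real.sqrt (N ^ 2 - 4 * N ^ α + 4 * N ^ (2 * α) / (N + N ^ α - 1)) with hsdef
      have hSge : (N-2)^2 ≤ N ^ 2 - 4 * N ^ α + 4 * N ^ (2 * α) / (N + N ^ α - 1) := by
        rw [hS, le_div_iff₀ hD0]
        nlinarith [hA0]
      have hsge : N - 2 ≤ s := by
        have h := Real.sqrt_le_sqrt hSge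
        rwa [Real.sqrt_sq (by linarith : (0:ℝ) ≤ N - 2)] at h
      have hrw : N ^ (-(α - 1)) = N / N ^ α := by
        rw [show -(α - 1) = 1 - α by ring, Real.rpow_sub hN0, Real.rpow_one]
      rw [hrw, show 2 * (N / N ^ α) = (2*N) / N ^ α by ring]
      rw [div_le_div_iff₀ (mul_pos hD0 (by linarith : (0:ℝ) < s + (N-2))) (by positivity)]
      have hDE : N ^ α * N ≤ (N + N ^ α - 1) * (s + (N - 2)) := by
        apply mul_le_mul (by linarith) (by linarith) (by linarith) (le_of_lt hD0)
      nlinarith [hDE, hA0, hN0]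
  have := hT1.add hT2
  simpa using this
end
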